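/- arXiv:2502.03324 — 3 statements merged into one kernel-verified Lean document; each statement's English description precedes it below -/
import Mathlib

section
/- Let (x, y), (x′, y′) ∈ ℝ² satisfy y > 0, y > |x| − 1, y′ > 0 and y′ > |x′| − 1. Then the following are equivalent: (a) there exist ε₁, ε₂ ∈ {−1, 1}, t ∈ ℝ and m, n ∈ ℤ such that the point (ε₁·x′, ε₂·y′) lies on the boundary of the rectangle [−(1+y), 1+y] × [−y, y] and ((−1)^m·ε₁·x′ + 2m(y+1), (−1)^n·ε₂·y′ + 2ny) = (x + t, y + t); (b) y′ = y and there exist δ ∈ {0, 1} and integers k₁, k₂ with x = (−1)^δ·x′ + 2k₁ + 2k₂·y. -/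
lemma neg_one_zpow_cases (k : ℤ) : (-1:ℝ)^k = 1 ∨ (-1:ℝ)^k = -1 := by
  rcases Int.even_or_odd k with h | h
  · exact Or.inl h.neg_one_zpow
  · exact Or.inr h.neg_one_zpow

lemma neg_one_zpow_sq (k : ℤ) : (-1:ℝ)^k * (-1:ℝ)^k = 1 := by
  rcases neg_one_zpow_cases k with h | h <;> rw [h] <;> norm_num

/-- Combinatorial core of the classification of split Lagrangian tori:
for `(x, y), (x', y')` in the region `Q = {y > 0, y > |x| - 1}`, some reflected copy
`(±x', ±y')` is an admissible bouncing point of the slope-1 billiard trajectory of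
`(x, y)` in the rectangle `[-(1+y), 1+y] × [-y, y]` (stated in unfolded form) if and
only if `y' = y` and `x = (-1)^δ x' + 2k₁ + 2k₂ y` for some `δ ∈ {0,1}` and integers
`k₁, k₂`. -/
theorem billiard_iff_arithmetic (x y x' y' : ℝ)
    (hy : 0 < y) (hxy : |x| - 1 < y) (hy' : 0 < y') (hxy' : |x'| - 1 < y') :
    (∃ ε₁ ∈ ({-1, 1} : Set ℝ), ∃ ε₂ ∈ ({-1, 1} : Set ℝ), ∃ t : ℝ, ∃ m n : ℤ,
        |ε₁ * x'| ≤ 1 + y ∧ |ε₂ * y'| ≤ y ∧ (|ε₁ * x'| = 1 + y ∨ |ε₂ * y'| = y) ∧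
        (-1 : ℝ) ^ m * (ε₁ * x') + 2 * m * (y + 1) = x + t ∧
        (-1 : ℝ) ^ n * (ε₂ * y') + 2 * n * y = y + t) ↔
    (y' = y ∧ ∃ δ ∈ ({0, 1} : Set ℕ), ∃ k₁ k₂ : ℤ,
        x = (-1 : ℝ) ^ δ * x' + 2 * k₁ + 2 * k₂ * y) := by
  constructor
  · rintro ⟨ε₁, hε₁, ε₂, hε₂, t, m, n, h1, h2, h3, h4, h5⟩
    have hε₁' : ε₁ = -1 ∨ ε₁ = 1 := hε₁
    have hε₂' : ε₂ = -1 ∨ ε₂ = 1 := hε₂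
    have habs1 : |ε₁ * x'| = |x'| := by
      rcases hε₁' with h | h <;> subst h <;> simp
    have habs2 : |ε₂ * y'| = y' := by
      rcases hε₂' with h | h <;> subst h <;> simp [abs_of_pos hy']
    have hyy : y' = y := by
      rcases h3 with h | h
      · rw [habs1] at h
        rw [habs2] at h2
        linarith
      · rw [habs2] at h; exact h
    subst hyy
    refine ⟨rfl, ?_⟩
    have hs : (-1:ℝ)^m * ε₁ = 1 ∨ (-1:ℝ)^m * ε₁ = -1 := by
      rcases neg_one_zpow_cases m with h | h <;> rcases hε₁' with h' | h' <;>
        rw [h, h'] <;> norm_num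
    have he : (-1:ℝ)^n * ε₂ = 1 ∨ (-1:ℝ)^n * ε₂ = -1 := by
      rcases neg_one_zpow_cases n with h | h <;> rcases hε₂' with h' | h' <;>
        rw [h, h'] <;> norm_num
    rw [← mul_assoc] at h4 h5
    rcases hs with hs | hs <;> rcases he with he | he <;> rw [hs] at h4 <;> rw [he] at h5
    · exact ⟨0, Or.inl rfl, m, m - n, by push_cast; linear_combination h5 - h4⟩
    · exact ⟨0, Or.inl rfl, m, m - n + 1, by push_cast; linear_combination h5 - h4⟩
    · exact ⟨1, Or.inr rfl, m, m - n, by push_cast; linear_combination h5 - h4⟩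
    · exact ⟨1, Or.inr rfl, m, m - n + 1, by push_cast; linear_combination h5 - h4⟩
  · rintro ⟨hyy, δ, hδ, k₁, k₂, hx⟩
    subst hyy
    have hδ' : δ = 0 ∨ δ = 1 := hδ
    refine ⟨(-1:ℝ)^k₁ * (-1:ℝ)^δ, ?_, (-1:ℝ)^(k₁ - k₂), ?_,
        2 * ((k₁ - k₂ : ℤ) : ℝ) * y', k₁, k₁ - k₂, ?_, ?_, ?_, ?_, ?_⟩
    · rcases neg_one_zpow_cases k₁ with h | h <;> rcases hδ' with h' | h' <;>
        subst h' <;> rw [h] <;> norm_num [Set.mem_insert_iff, Set.mem_singleton_iff]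
    · rcases neg_one_zpow_cases (k₁ - k₂) with h | h <;> rw [h] <;>
        norm_num [Set.mem_insert_iff, Set.mem_singleton_iff]
    · have : |(-1:ℝ)^k₁ * (-1:ℝ)^δ * x'| = |x'| := by
        rcases neg_one_zpow_cases k₁ with h | h <;> rcases hδ' with h' | h' <;>
          subst h' <;> rw [h] <;> simp
      rw [this]; linarith
    · have : |(-1:ℝ)^(k₁ - k₂) * y'| = y' := by
        rcases neg_one_zpow_cases (k₁ - k₂) with h | h <;> rw [h] <;>
          simp [abs_of_pos hy']
      rw [this]
    · right
      rcases neg_one_zpow_cases (k₁ - k₂) with h | h <;> rw [h] <;>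
        simp [abs_of_pos hy']
    · push_cast
      linear_combination ((-1:ℝ)^δ * x') * neg_one_zpow_sq k₁ - hx
    · push_cast
      linear_combination y' * neg_one_zpow_sq (k₁ - k₂)
end

section
/- Let p and q be coprime positive integers, set y = p/q, and let x ∈ ℝ. Then there exist δ ∈ {0, 1} and integers k₁, k₂ with 1 − y < (−1)^δ·x + 2k₁ + 2k₂·y < 1 + y if and only if it is NOT the case that p = 1 and x = (q − 2l − 1)/q for some integer l. -/
/-- Characterization of ball-nonmonotone split tori, rational case: for `y = p/q`
with `p, q` coprime positive and `x : ℝ`, the equivalence class of `x` meets the open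
interval `(1 - y, 1 + y)` if and only if it is not the case that `p = 1` and
`x = (q - 2l - 1)/q` for some integer `l`. -/
theorem ball_nonmonotone_rational_iff (p q : ℕ) (hp : 0 < p) (hq : 0 < q)
    (hpq : Nat.Coprime p q) (y : ℝ) (hy : y = (p : ℝ) / (q : ℝ)) (x : ℝ) :
    (∃ δ ∈ ({0, 1} : Set ℕ), ∃ k₁ k₂ : ℤ,
        1 - y < (-1 : ℝ) ^ δ * x + 2 * k₁ + 2 * k₂ * y ∧
        (-1 : ℝ) ^ δ * x + 2 * k₁ + 2 * k₂ * y < 1 + y) ↔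
      ¬(p = 1 ∧ ∃ l : ℤ, x = ((q : ℝ) - 2 * l - 1) / (q : ℝ)) := by
  have hq0 : (0:ℝ) < q := by exact_mod_cast hq
  have hqne : (q:ℝ) ≠ 0 := ne_of_gt hq0
  constructor
  · rintro ⟨δ, hδ, k₁, k₂, h1, h2⟩ ⟨hp1, l, hx⟩
    subst hp1
    have hy1 : y = 1 / (q:ℝ) := by rw [hy]; norm_num
    have hδ' : δ = 0 ∨ δ = 1 := hδ
    rcases hδ' with rfl | rfl
    · -- value = (q - 2l - 1 + 2k₁ q + 2k₂)/q
      set N : ℤ := (q:ℤ) - 2*l - 1 + 2*k₁*q + 2*k₂ with hN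
      have hk : (q:ℝ) * ((-1:ℝ)^0 * x + 2*k₁ + 2*k₂*y) = (N:ℤ) := by
        rw [hy1, hx]; field_simp; rw [hN]; push_cast; ring
      have hA : (q:ℝ) * (1 - y) = (q:ℝ) - 1 := by rw [hy1]; field_simp
      have hB : (q:ℝ) * (1 + y) = (q:ℝ) + 1 := by rw [hy1]; field_simp
      have e1 : (q:ℝ) - 1 < (N:ℝ) := by
        rw [← hA, ← hk]; exact (mul_lt_mul_iff_right₀ hq0).mpr h1
      have e2 : (N:ℝ) < (q:ℝ) + 1 := by
        rw [← hB, ← hk]; exact (mul_lt_mul_iff_right₀ hq0).mpr h2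
      have e1' : (q:ℤ) - 1 < N := by exact_mod_cast e1
      have e2' : N < (q:ℤ) + 1 := by exact_mod_cast e2
      have hNq : N = q := by omega
      rw [hN] at hNq
      have : (1:ℤ) = 2*(k₁*q + k₂ - l) := by linarith
      omega
    · set N : ℤ := -((q:ℤ) - 2*l - 1) + 2*k₁*q + 2*k₂ with hN
      have hk : (q:ℝ) * ((-1:ℝ)^1 * x + 2*k₁ + 2*k₂*y) = (N:ℤ) := by
        rw [hy1, hx]; field_simp; rw [hN]; push_cast; ring
      have hA : (q:ℝ) * (1 - y) = (q:ℝ) - 1 := by rw [hy1]; field_simp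
      have hB : (q:ℝ) * (1 + y) = (q:ℝ) + 1 := by rw [hy1]; field_simp
      have e1 : (q:ℝ) - 1 < (N:ℝ) := by
        rw [← hA, ← hk]; exact (mul_lt_mul_iff_right₀ hq0).mpr h1
      have e2 : (N:ℝ) < (q:ℝ) + 1 := by
        rw [← hB, ← hk]; exact (mul_lt_mul_iff_right₀ hq0).mpr h2
      have e1' : (q:ℤ) - 1 < N := by exact_mod_cast e1
      have e2' : N < (q:ℤ) + 1 := by exact_mod_cast e2
      have hNq : N = q := by omega
      rw [hN] at hNq
      have : (1:ℤ) = 2*((q:ℤ) - l - k₁*q - k₂) := by linarith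
      omega
  · intro h
    have main : ∀ m : ℤ, (q:ℝ) - p < (q:ℝ)*x + 2*m → (q:ℝ)*x + 2*m < (q:ℝ) + p →
        (∃ δ ∈ ({0, 1} : Set ℕ), ∃ k₁ k₂ : ℤ,
          1 - y < (-1 : ℝ) ^ δ * x + 2 * k₁ + 2 * k₂ * y ∧
          (-1 : ℝ) ^ δ * x + 2 * k₁ + 2 * k₂ * y < 1 + y) := by
      intro m hm1 hm2
      obtain ⟨u, v, huv⟩ := Nat.isCoprime_iff_coprime.mpr hpq
      have h' : (u:ℝ)*(p:ℝ) + (v:ℝ)*(q:ℝ) = 1 := by exact_mod_cast huv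
      refine ⟨0, Or.inl rfl, m*v, m*u, ?_, ?_⟩
      · have hk : (q:ℝ) * ((-1:ℝ)^0 * x + 2*(↑(m*v)) + 2*(↑(m*u))*y) = (q:ℝ)*x + 2*m := by
          have hqp : (q:ℝ) * ((p:ℝ)/(q:ℝ)) = p := by field_simp
          rw [hy]; push_cast
          linear_combination (2*(m:ℝ)*(u:ℝ))*hqp + (2*(m:ℝ))*h'
        rw [← mul_lt_mul_iff_right₀ hq0, hk]
        have hA : (q:ℝ) * (1 - y) = (q:ℝ) - p := by rw [hy]; field_simp
        rw [hA]; exact hm1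
      · have hk : (q:ℝ) * ((-1:ℝ)^0 * x + 2*(↑(m*v)) + 2*(↑(m*u))*y) = (q:ℝ)*x + 2*m := by
          have hqp : (q:ℝ) * ((p:ℝ)/(q:ℝ)) = p := by field_simp
          rw [hy]; push_cast
          linear_combination (2*(m:ℝ)*(u:ℝ))*hqp + (2*(m:ℝ))*h'
        rw [← mul_lt_mul_iff_right₀ hq0, hk]
        have hB : (q:ℝ) * (1 + y) = (q:ℝ) + p := by rw [hy]; field_simp
        rw [hB]; exact hm2
    by_cases hp1 : p = 1
    · push_neg at h
      have hx' := h hp1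
      subst hp1
      set s : ℝ := ((q:ℝ) + 1 - (q:ℝ)*x)/2 with hs
      have hub : (⌊s⌋ : ℝ) < s := by
        rcases lt_or_eq_of_le (Int.floor_le s) with h' | h'
        · exact h'
        · exfalso
          apply hx' (⌊s⌋ - 1)
          have : (⌊s⌋:ℝ) = ((q:ℝ) + 1 - (q:ℝ)*x)/2 := by rw [h']
          push_cast
          field_simp
          linarith
      have hlb : s - 1 < (⌊s⌋ : ℝ) := Int.sub_one_lt_floor s
      apply main ⌊s⌋
      · push_cast; rw [hs] at hub hlb ⊢; linarith
      · push_cast; rw [hs] at hub hlb ⊢; linarith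
    · have hp2 : (2:ℝ) ≤ p := by
        have : 2 ≤ p := by omega
        exact_mod_cast this
      set t : ℝ := ((q:ℝ) - p - (q:ℝ)*x) with ht
      set m : ℤ := ⌊t/2⌋ + 1 with hm
      have h1 : t/2 < (m:ℝ) := by
        rw [hm]; push_cast; linarith [Int.lt_floor_add_one (t/2)]
      have h2 : (m:ℝ) ≤ t/2 + 1 := by
        rw [hm]; push_cast; linarith [Int.floor_le (t/2)]
      apply main m
      · rw [ht] at h1; linarith
      · rw [ht] at h1 h2; linarith
end

section
/- Let α, x, x′, y ∈ ℝ, let δ ∈ {0, 1}, and let a₁, a₂, a₃, a₄ be integers satisfying a₂ − a₄ = (−1)^δ, a₁ + a₂ + a₃ + a₄ = 1, and a₁·(α − y) + a₂·(1 + α − x′) + a₃·(α + y) + a₄·(1 + α + x′) = 1 + α − x. Then there exist integers k₁, k₂ with x = (−1)^δ·x′ + 2k₁ + 2k₂·y; explicitly, if δ = 0 then k₁ = 1 − a₂ and k₂ = a₁ + a₂ − 1, and if δ = 1 then k₁ = −a₂ and k₂ = a₁ + a₂. -/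
/-- The main obstruction computation: if the integer coefficients `a₁, a₂, a₃, a₄`
satisfy the determinant constraint `a₂ - a₄ = (-1)^δ`, the Maslov constraint
`a₁ + a₂ + a₃ + a₄ = 1` and the area constraint
`a₁(α - y) + a₂(1 + α - x') + a₃(α + y) + a₄(1 + α + x') = 1 + α - x`,
then `x = (-1)^δ x' + 2k₁ + 2k₂ y` with the explicit values of `k₁, k₂`. -/
theorem obstruction_computation (α x x' y : ℝ) (δ : ℕ) (hδ : δ ∈ ({0, 1} : Set ℕ))
    (a₁ a₂ a₃ a₄ : ℤ)
    (hdet : a₂ - a₄ = (-1 : ℤ) ^ δ)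
    (hmaslov : a₁ + a₂ + a₃ + a₄ = 1)
    (harea : (a₁ : ℝ) * (α - y) + (a₂ : ℝ) * (1 + α - x') + (a₃ : ℝ) * (α + y)
        + (a₄ : ℝ) * (1 + α + x') = 1 + α - x) :
    ∃ k₁ k₂ : ℤ, x = (-1 : ℝ) ^ δ * x' + 2 * k₁ + 2 * k₂ * y ∧
      (δ = 0 → k₁ = 1 - a₂ ∧ k₂ = a₁ + a₂ - 1) ∧
      (δ = 1 → k₁ = -a₂ ∧ k₂ = a₁ + a₂) := by
  have hdetR : (a₂ : ℝ) - a₄ = (-1 : ℝ) ^ δ := by exact_mod_cast hdet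
  have hmR : (a₁ : ℝ) + a₂ + a₃ + a₄ = 1 := by exact_mod_cast hmaslov
  rcases hδ with h | h <;> subst h
  · refine ⟨1 - a₂, a₁ + a₂ - 1, ?_, fun _ => ⟨rfl, rfl⟩, fun h => by simp at h⟩
    push_cast
    simp only [pow_zero] at hdetR ⊢
    linear_combination harea + (-α - y) * hmR + (1 + x' - y) * hdetR
  · refine ⟨-a₂, a₁ + a₂, ?_, fun h => by simp at h, fun _ => ⟨rfl, rfl⟩⟩
    push_cast
    simp only [pow_one] at hdetR ⊢
    linear_combination harea + (-α - y) * hmR + (1 + x' - y) * hdetR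
end
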